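/- Let U and V be nonempty closed convex subsets of X, let A = N_U and B = N_V be their normal cone operators, and let T_{(A,B)} = Id − P_U + P_V ∘ (2P_U − Id), where P_U and P_V are the metric projections onto U and V. Then the infimal displacement vector v_{(A,B)}, i.e. the unique minimal-norm element of cl(ran(Id − T_{(A,B)})), equals the unique minimal-norm element of cl(U − V) (the projection of 0 onto cl(U − V)). -/

import Mathlib

open Set Pointwise

/-- Domain of a set-valued operator. -/
def svDom {X : Type*} (A : X → Set X) : Set X := {x | (A x).Nonempty}

/-- Range of a set-valued operator. -/
def svRan {X : Type*} (A : X → Set X) : Set X := ⋃ x, A x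

/-- Monotonicity of a set-valued operator. -/
def IsMonotoneOp {X : Type*} [NormedAddCommGroup X] [InnerProductSpace ℝ X]
    (A : X → Set X) : Prop :=
  ∀ ⦃x u y v : X⦄, u ∈ A x → v ∈ A y → 0 ≤ (inner ℝ (x - y) (u - v) : ℝ)

/-- Maximal monotonicity of a set-valued operator. -/
def IsMaxMonotoneOp {X : Type*} [NormedAddCommGroup X] [InnerProductSpace ℝ X]
    (A : X → Set X) : Prop :=
  IsMonotoneOp A ∧
    ∀ x u : X, (∀ y v : X, v ∈ A y → 0 ≤ (inner ℝ (x - y) (u - v) : ℝ)) → u ∈ A x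

/-- `A` is 3* monotone (rectangular): for every `x ∈ dom A` and `v ∈ ran A`, the set
`{⟪x - z, v - w⟫ : (z,w) ∈ gra A}` is bounded below. -/
def Is3StarMonotoneOp {X : Type*} [NormedAddCommGroup X] [InnerProductSpace ℝ X]
    (A : X → Set X) : Prop :=
  ∀ x ∈ svDom A, ∀ v ∈ svRan A,
    BddBelow {r : ℝ | ∃ z w : X, w ∈ A z ∧ r = (inner ℝ (x - z) (v - w) : ℝ)}

/-- Two sets are nearly equal if they have the same closure and the same relative
(intrinsic) interior. -/
def NearEq {X : Type*} [NormedAddCommGroup X] [NormedSpace ℝ X] (C D : Set X) : Prop :=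
  closure C = closure D ∧ intrinsicInterior ℝ C = intrinsicInterior ℝ D

/-- `J` is the resolvent of `A`: the single-valued, everywhere-defined map with
`x - J x ∈ A (J x)` for all `x`. -/
def IsResolventOf {X : Type*} [NormedAddCommGroup X] (J : X → X) (A : X → Set X) : Prop :=
  ∀ x : X, x - J x ∈ A (J x)

/-- The Douglas–Rachford operator `T = Id - J_A + J_B ∘ (2 J_A - Id)` built from
the resolvents `J_A` and `J_B`. -/
noncomputable def drT {X : Type*} [NormedAddCommGroup X] [NormedSpace ℝ X]
    (JA JB : X → X) : X → X :=
  fun x => x - JA x + JB ((2 : ℝ) • JA x - x)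

/-- `P` is the metric projection onto `U`. -/
def IsMetricProjection {X : Type*} [NormedAddCommGroup X] (P : X → X) (U : Set X) : Prop :=
  ∀ x : X, P x ∈ U ∧ ∀ y ∈ U, ‖x - P x‖ ≤ ‖x - y‖

/-!
Every displacement `x - T x = P_U x - P_V (2 P_U x - x)` lies in `U - V`; conversely, for
`u ∈ U` and `w ∈ V` the displacement at `u` is `u - P_V u`, which is no longer than `u - w`.
So the norms on `ran (Id - T)` and on `U - V` have the same infimum, and both vectors are
minimal-norm points of the closed convex set `cl (U - V)`, where such a point is unique because
a Hilbert space is strictly convex.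
-/

theorem eq_of_mem_of_forall_norm_le {E : Type*} [NormedAddCommGroup E] [NormedSpace ℝ E]
    [StrictConvexSpace ℝ E] {K : Set E} (hK : Convex ℝ K) {a b : E} (ha : a ∈ K) (hb : b ∈ K)
    (hmin : ∀ w ∈ K, ‖b‖ ≤ ‖w‖) (hab : ‖a‖ ≤ ‖b‖) : a = b := by
  by_contra hne
  have hmid : (1 / 2 : ℝ) • a + (1 / 2 : ℝ) • b ∈ K := hK ha hb (by norm_num) (by norm_num)
    (by norm_num)
  have hlt : ‖(1 / 2 : ℝ) • a + (1 / 2 : ℝ) • b‖ < ‖b‖ :=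
    norm_combo_lt_of_ne hab le_rfl hne (by norm_num) (by norm_num) (by norm_num)
  exact (hmin _ hmid).not_gt hlt

theorem norm_le_of_mem_closure_of_forall_exists_norm_le {E : Type*} [SeminormedAddCommGroup E]
    {S C : Set E} {v w : E} (hS : ∀ s ∈ S, ‖v‖ ≤ ‖s‖) (hC : ∀ c ∈ C, ∃ s ∈ S, ‖s‖ ≤ ‖c‖)
    (hw : w ∈ closure C) : ‖v‖ ≤ ‖w‖ := by
  have hCsub : C ⊆ {w | ‖v‖ ≤ ‖w‖} := fun c hc => by
    obtain ⟨s, hs, hsc⟩ := hC c hc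
    exact (hS s hs).trans hsc
  exact closure_minimal hCsub (isClosed_le continuous_const continuous_norm) hw

theorem IsMetricProjection.apply_eq_self {X : Type*} [NormedAddCommGroup X] {P : X → X}
    {U : Set X} (hP : IsMetricProjection P U) {u : X} (hu : u ∈ U) : P u = u := by
  have h := (hP u).2 u hu
  rw [sub_self, norm_zero, norm_le_zero_iff, sub_eq_zero] at h
  exact h.symm

section DouglasRachford

variable {X : Type*} [NormedAddCommGroup X] [NormedSpace ℝ X]

theorem sub_drT_apply (JA JB : X → X) (x : X) :
    x - drT JA JB x = JA x - JB ((2 : ℝ) • JA x - x) := by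
  simp only [drT]
  abel

theorem sub_drT_apply_of_apply_eq {JA : X → X} (JB : X → X) {x : X} (hx : JA x = x) :
    x - drT JA JB x = x - JB x := by
  rw [sub_drT_apply, hx, two_smul, add_sub_cancel_right]

theorem range_sub_drT_subset {JA JB : X → X} {U V : Set X} (hA : ∀ x, JA x ∈ U)
    (hB : ∀ x, JB x ∈ V) : range (fun x => x - drT JA JB x) ⊆ U - V := by
  rintro _ ⟨x, rfl⟩
  simpa only [sub_drT_apply] using sub_mem_sub (hA x) (hB _)

theorem exists_mem_range_sub_drT_norm_le {PU PV : X → X} {U V : Set X}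
    (hPU : IsMetricProjection PU U) (hPV : IsMetricProjection PV V) {c : X} (hc : c ∈ U - V) :
    ∃ s ∈ range (fun x => x - drT PU PV x), ‖s‖ ≤ ‖c‖ := by
  obtain ⟨u, hu, w, hw, rfl⟩ := hc
  exact ⟨u - PV u, ⟨u, sub_drT_apply_of_apply_eq PV (hPU.apply_eq_self hu)⟩, (hPV u).2 w hw⟩

end DouglasRachford

theorem infDisp_normalCones_eq_proj_general {X : Type*} [NormedAddCommGroup X]
    [InnerProductSpace ℝ X] (U V : Set X)
    (hUconv : Convex ℝ U) (hVconv : Convex ℝ V)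
    (PU PV : X → X)
    (hPU : IsMetricProjection PU U) (hPV : IsMetricProjection PV V)
    (v v' : X)
    (hv : v ∈ closure (Set.range fun x => x - drT PU PV x) ∧
      ∀ w ∈ closure (Set.range fun x => x - drT PU PV x), ‖v‖ ≤ ‖w‖)
    (hv' : v' ∈ closure (U - V) ∧ ∀ w ∈ closure (U - V), ‖v'‖ ≤ ‖w‖) :
    v = v' := by
  have hran := range_sub_drT_subset (fun x => (hPU x).1) (fun x => (hPV x).1)
  have hle : ‖v‖ ≤ ‖v'‖ :=
    norm_le_of_mem_closure_of_forall_exists_norm_le (fun s hs => hv.2 s (subset_closure hs))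
      (fun _ hc => exists_mem_range_sub_drT_norm_le hPU hPV hc) hv'.1
  exact eq_of_mem_of_forall_norm_le (hUconv.sub hVconv).closure (closure_mono hran hv.1) hv'.1
    hv'.2 hle

/-- For nonempty closed convex `U, V` with metric projections `P_U, P_V`, and
`T = Id - P_U + P_V ∘ (2 P_U - Id)` the Douglas–Rachford operator of `(N_U, N_V)`: the
infimal displacement vector, i.e. the minimal-norm element of `cl (ran (Id - T))`,
equals the minimal-norm element of `cl (U - V)`. -/
theorem infDisp_normalCones_eq_proj {X : Type*} [NormedAddCommGroup X]
    [InnerProductSpace ℝ X] [FiniteDimensional ℝ X] (U V : Set X)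
    (hUne : U.Nonempty) (hVne : V.Nonempty)
    (hUcl : IsClosed U) (hVcl : IsClosed V)
    (hUconv : Convex ℝ U) (hVconv : Convex ℝ V)
    (PU PV : X → X)
    (hPU : IsMetricProjection PU U) (hPV : IsMetricProjection PV V)
    (v v' : X)
    (hv : v ∈ closure (Set.range fun x => x - drT PU PV x) ∧
      ∀ w ∈ closure (Set.range fun x => x - drT PU PV x), ‖v‖ ≤ ‖w‖)
    (hv' : v' ∈ closure (U - V) ∧ ∀ w ∈ closure (U - V), ‖v'‖ ≤ ‖w‖) :
    v = v' :=
  infDisp_normalCones_eq_proj_general U V hUconv hVconv PU PV hPU hPV v v' hv hv'
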